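/- Let X be path connected and let H be a subgroup of π₁(X, x₀). Then X is homotopically Hausdorff relative to H if and only if the fiber (p_H⁻¹(x))^wh is a Hausdorff space for every x ∈ X. -/

import Mathlib

open Set TopologicalSpace unitInterval

universe u

namespace SLTF

attribute [local instance] Path.Homotopic.setoid

variable {X : Type u} [TopologicalSpace X]

/-- The homotopy class of a loop as an element of the fundamental group. -/
noncomputable def fl {x : X} (γ : Path x x) : FundamentalGroup X x :=
  @FundamentalGroup.fromPath X _ x ⟦γ⟧

/-- Multiplication of fundamental-group elements in path-concatenation order:
`pmul a b` is the class of "`a` followed by `b`". -/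
noncomputable def pmul {x : X} (a b : FundamentalGroup X x) : FundamentalGroup X x :=
  @FundamentalGroup.fromPath X _ x
    (Path.Homotopic.Quotient.trans (@FundamentalGroup.toPath X _ x a)
      (@FundamentalGroup.toPath X _ x b))

/-- A path in `X` starting at the base point `x`, recorded together with its end point. -/
structure PPath (X : Type u) [TopologicalSpace X] (x : X) where
  target : X
  path : Path x target

/-- Two paths starting at `x` are identified when they have the same end point and the
class of `α ⬝ β⁻¹` satisfies the predicate `P` (e.g. membership in a subgroup `H`). -/
def HRel (x : X) (P : Path x x → Prop) (α β : PPath X x) : Prop :=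
  ∃ h : α.target = β.target, P (α.path.trans ((β.path.cast rfl h).symm))

/-- The set `X̃` of `P`-equivalence classes of paths starting at `x`. -/
def Xtilde (x : X) (P : Path x x → Prop) : Type u := Quot (HRel x P)

/-- The class of a path in `X̃`. -/
def mkX (x : X) (P : Path x x → Prop) (α : PPath X x) : Xtilde x P := Quot.mk _ α

/-- The basic whisker-open set `([α], U)`: all classes of prolongations of `α` by a path in `U`. -/
def whBasic (x : X) (P : Path x x → Prop) (α : PPath X x) (U : Set X) : Set (Xtilde x P) :=
  { q | ∃ (y : X) (β : Path α.target y), range ⇑β ⊆ U ∧ q = mkX x P ⟨y, α.path.trans β⟩ }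

/-- The whisker topology on `X̃`, generated by the sets `([α], U)` for `U` an open
neighbourhood of the end point of `α`. -/
instance whTop (x : X) (P : Path x x → Prop) : TopologicalSpace (Xtilde x P) :=
  generateFrom
    { S | ∃ (α : PPath X x) (U : Set X), IsOpen U ∧ α.target ∈ U ∧ S = whBasic x P α U }

/-- The endpoint projection `p : X̃ → X`. -/
def endpt (x : X) (P : Path x x → Prop) : Xtilde x P → X :=
  Quot.lift (fun α => α.target) (fun _ _ h => h.elim fun e _ => e)

/-- The space of paths in `X` starting at `x`, with the compact-open topology. -/
def PSp (X : Type u) [TopologicalSpace X] (x : X) : Type u := { f : C(I, X) // f 0 = x }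

instance (x : X) : TopologicalSpace (PSp X x) := instTopologicalSpaceSubtype

/-- The natural surjection from the path space onto `X̃`. -/
def toXt (x : X) (P : Path x x → Prop) : PSp X x → Xtilde x P :=
  fun f => mkX x P ⟨f.1 1, ⟨f.1, f.2, rfl⟩⟩

/-- The quotient of the compact-open topology on `X̃`. -/
def topTop (x : X) (P : Path x x → Prop) : TopologicalSpace (Xtilde x P) :=
  coinduced (toXt x P) inferInstance

/-- Membership in a subgroup `H`, as a predicate on loops. -/
noncomputable def loopMem (x : X) (H : Subgroup (FundamentalGroup X x)) : Path x x → Prop :=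
  fun γ => fl γ ∈ H

/-- `X̃_H`, the classes of paths starting at `x₀` modulo `H`. -/
abbrev XtildeH (x₀ : X) (H : Subgroup (FundamentalGroup X x₀)) : Type u :=
  Xtilde x₀ (loopMem x₀ H)

/-- The fiber of the endpoint projection over `y`, with the subspace (whisker) topology. -/
abbrev Fib (x : X) (P : Path x x → Prop) (y : X) : Type u :=
  { q : Xtilde x P // endpt x P q = y }

/-- The class in the fiber over `y` of a path from `x` to `y`. -/
def mkFib (x : X) (P : Path x x → Prop) {y : X} (δ : Path x y) : Fib x P y :=
  ⟨mkX x P ⟨y, δ⟩, rfl⟩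

/-- The whisker topology on the fundamental group `π₁(X, x)`: basic neighbourhoods of `a`
are the sets `{a ⋆ [γ] : γ a loop in U at x}` for `U` an open neighbourhood of `x`. -/
noncomputable def whPi1 (x : X) : TopologicalSpace (FundamentalGroup X x) :=
  generateFrom
    { S | ∃ (a : FundamentalGroup X x) (U : Set X), IsOpen U ∧ x ∈ U ∧
        S = { b | ∃ γ : Path x x, range ⇑γ ⊆ U ∧ b = pmul a (fl γ) } }

/-- The quotient topology on `π₁(X, x)` induced from the loop space with the
compact-open topology. -/
noncomputable def qtopPi1 (x : X) : TopologicalSpace (FundamentalGroup X x) :=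
  coinduced (fun γ : Path x x => fl γ) inferInstance

/-- `X` is `H`-SLT at `x₀`. -/
noncomputable def IsHSLTAt (x₀ : X) (H : Subgroup (FundamentalGroup X x₀)) : Prop :=
  ∀ (y : X) (α : Path x₀ y) (U : Set X), IsOpen U → x₀ ∈ U →
    ∃ V : Set X, IsOpen V ∧ y ∈ V ∧
      ∀ β : Path y y, range ⇑β ⊆ V →
        ∃ γ : Path x₀ x₀, range ⇑γ ⊆ U ∧
          fl ((α.trans (β.trans α.symm)).trans γ.symm) ∈ H

/-- `X` is SLT at `x`. -/
def IsSLTAt (X : Type u) [TopologicalSpace X] (x : X) : Prop :=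
  ∀ (y : X) (α : Path x y) (U : Set X), IsOpen U → x ∈ U →
    ∃ V : Set X, IsOpen V ∧ y ∈ V ∧
      ∀ β : Path y y, range ⇑β ⊆ V →
        ∃ γ : Path x x, range ⇑γ ⊆ U ∧ (α.trans (β.trans α.symm)).Homotopic γ

/-- `X` is an SLT space. -/
def IsSLT (X : Type u) [TopologicalSpace X] : Prop := ∀ x : X, IsSLTAt X x

/-- `α` (a path from `x` to `y`) is an `H`-SLT path: for every path `lam` from `x₀` to `x`
and open `U ∋ x` there is an open `V ∋ y` such that every loop `β` in `V` at `y` transfers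
to a loop `γ` in `U` at `x` with `[α ⋆ β ⋆ α⁻¹ ⋆ γ⁻¹] ∈ [lam⁻¹ H lam]`, i.e.
`[lam ⋆ (α ⋆ β ⋆ α⁻¹ ⋆ γ⁻¹) ⋆ lam⁻¹] ∈ H`. -/
noncomputable def IsHSLTPath (x₀ : X) (H : Subgroup (FundamentalGroup X x₀)) {x y : X}
    (α : Path x y) : Prop :=
  ∀ (lam : Path x₀ x) (U : Set X), IsOpen U → x ∈ U →
    ∃ V : Set X, IsOpen V ∧ y ∈ V ∧
      ∀ β : Path y y, range ⇑β ⊆ V →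
        ∃ γ : Path x x, range ⇑γ ⊆ U ∧
          fl (lam.trans ((((α.trans (β.trans α.symm)).trans γ.symm)).trans lam.symm)) ∈ H

/-- `X` is an `H`-SLT space: for every `x` and every path `lam` from `x₀` to `x`, `X` is
`[lam⁻¹ H lam]`-SLT at `x`. -/
noncomputable def IsHSLTSpace (x₀ : X) (H : Subgroup (FundamentalGroup X x₀)) : Prop :=
  ∀ (x y : X) (α : Path x y), IsHSLTPath x₀ H α

/-- Membership in the conjugate subgroup `[lam⁻¹ H lam]` of `π₁(X, x)`,
as a predicate on loops at `x`. -/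
noncomputable def conjMem (x₀ : X) (H : Subgroup (FundamentalGroup X x₀)) {x : X}
    (lam : Path x₀ x) : Path x x → Prop :=
  fun δ => fl (lam.trans (δ.trans lam.symm)) ∈ H

/-- `X` is homotopically Hausdorff relative to `H`. -/
noncomputable def HomHausdorffRel (x₀ : X) (H : Subgroup (FundamentalGroup X x₀)) : Prop :=
  ∀ (y : X) (α : Path x₀ y) (g : FundamentalGroup X x₀), g ∉ H →
    ∃ U : Set X, IsOpen U ∧ y ∈ U ∧
      ∀ γ : Path y y, range ⇑γ ⊆ U →
        ¬ ∃ h ∈ H, fl (α.trans (γ.trans α.symm)) = pmul h g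

/-- `X` is homotopically path Hausdorff relative to `H`. -/
noncomputable def HomPathHausdorffRel (x₀ : X) (H : Subgroup (FundamentalGroup X x₀)) : Prop :=
  ∀ (y : X) (α β : Path x₀ y), fl (α.trans β.symm) ∉ H →
    ∃ (n : ℕ) (t : Fin (n + 1) → I) (U : Fin n → Set X),
      t 0 = 0 ∧ t (Fin.last n) = 1 ∧ StrictMono t ∧
      (∀ i : Fin n, IsOpen (U i)) ∧
      (∀ i : Fin n, ⇑α '' Set.Icc (t i.castSucc) (t i.succ) ⊆ U i) ∧
      ∀ γ : Path x₀ y,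
        (∀ i : Fin n, ⇑γ '' Set.Icc (t i.castSucc) (t i.succ) ⊆ U i) →
        (∀ i : Fin (n + 1), γ (t i) = α (t i)) →
        fl (γ.trans β.symm) ∉ H

/-- The endpoint projection `p : X̃ → X` (with the whisker topology on `X̃`) has the
unique path lifting property. -/
def UPLP (x : X) (P : Path x x → Prop) : Prop :=
  ∀ g₁ g₂ : C(I, Xtilde x P), g₁ 0 = g₂ 0 →
    (∀ t, endpt x P (g₁ t) = endpt x P (g₂ t)) → g₁ = g₂

/-- A semicovering map: a local homeomorphism with (continuous) unique lifting of paths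
and of homotopies. -/
structure IsSemicovering {Y : Type u} [TopologicalSpace Y] (p : Y → X) : Prop where
  localHomeo : IsLocalHomeomorph p
  pathLift : ∀ (y : Y) (γ : C(I, X)), γ 0 = p y →
    ∃! γh : C(I, Y), γh 0 = y ∧ ∀ t, p (γh t) = γ t
  contPathLift : ∀ y : Y, ∃ L : { γ : C(I, X) // γ 0 = p y } → C(I, Y),
    Continuous L ∧ ∀ γ, (L γ) 0 = y ∧ ∀ t, p ((L γ) t) = (γ : C(I, X)) t
  homotopyLift : ∀ (y : Y) (Φ : C(I × I, X)), Φ (0, 0) = p y →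
    ∃! Φh : C(I × I, Y), Φh (0, 0) = y ∧ ∀ z, p (Φh z) = Φ z
  contHomotopyLift : ∀ y : Y, ∃ L : { Φ : C(I × I, X) // Φ (0, 0) = p y } → C(I × I, Y),
    Continuous L ∧ ∀ Φ, (L Φ) (0, 0) = y ∧ ∀ z, p ((L Φ) z) = (Φ : C(I × I, X)) z

/-- An `lpc₀`-covering map with `p₊π₁(Y, ·) = H`: a map which is equivalent, as a map
over `X`, to the endpoint projection `p_H : X̃_H → X` having the unique path lifting
property (with `Y` path connected and locally path connected). -/
structure IsLpc0Covering {Y : Type u} [TopologicalSpace Y] (p : Y → X) (x₀ : X)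
    (H : Subgroup (FundamentalGroup X x₀)) : Prop where
  pathConnected : PathConnectedSpace Y
  locPathConnected : LocPathConnectedSpace Y
  uplp : UPLP x₀ (loopMem x₀ H)
  equiv : ∃ φ : Y ≃ₜ XtildeH x₀ H, ∀ y, endpt x₀ (loopMem x₀ H) (φ y) = p y

/-- The homomorphism induced by `p` on fundamental groups, as a function. -/
noncomputable def pStar {Y : Type u} [TopologicalSpace Y] (p : C(Y, X)) (y₀ : Y) :
    FundamentalGroup Y y₀ → FundamentalGroup X (p y₀) :=
  fun g => @FundamentalGroup.fromPath X _ (p y₀)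
    (Path.Homotopic.Quotient.map (@FundamentalGroup.toPath Y _ y₀ g) p)

/-! Both conditions say the same thing about pairs of paths `α, β` from `x₀` to `y` with
`[α]_H ≠ [β]_H`: some open `U ∋ y` carries no loop `γ` with `[α ⋆ γ]_H = [β]_H`.
For homotopic Hausdorffness take `g = [β ⋆ α⁻¹]`, because `[α ⋆ γ ⋆ α⁻¹] ∈ H g` exactly when
`[α ⋆ γ ⋆ β⁻¹] ∈ H`. On the fiber side, the sets `([α], U)` form a neighbourhood basis at `[α]`,
and a point common to `([α], U)` and `([β], U)` in the fiber over `y` is the same thing as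
such a loop `γ` in `U`. -/

open CategoryTheory Topology

section Groupoid

variable {X : Type u} [TopologicalSpace X]

abbrev pathClass {x y : X} (p : Path x y) :
    FundamentalGroupoid.mk x ⟶ FundamentalGroupoid.mk y := ⟦p⟧

theorem pathClass_trans {x y z : X} (p : Path x y) (q : Path y z) :
    pathClass (p.trans q) = pathClass p ≫ pathClass q :=
  rfl

theorem pathClass_symm {x y : X} (p : Path x y) : pathClass p.symm = inv (pathClass p) := by
  rw [← Groupoid.inv_eq_inv]
  rfl

theorem pathClass_refl (x : X) : pathClass (Path.refl x) = 𝟙 (FundamentalGroupoid.mk x) := rfl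

theorem fl_eq_iff {x : X} {γ δ : Path x x} : fl γ = fl δ ↔ pathClass γ = pathClass δ := Iff.rfl

theorem fl_surjective (x : X) : Function.Surjective (fl : Path x x → FundamentalGroup X x) :=
  Path.Homotopic.Quotient.mk_surjective

theorem fl_mul {x : X} (γ δ : Path x x) : fl γ * fl δ = fl (δ.trans γ) := rfl

theorem fl_inv {x : X} (γ : Path x x) : (fl γ)⁻¹ = fl γ.symm := rfl

theorem fl_refl (x : X) : fl (Path.refl x) = 1 := rfl

theorem pmul_eq_mul {x : X} (a b : FundamentalGroup X x) : pmul a b = b * a := rfl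

variable {x y : X}

theorem fl_trans_symm_of_pathClass_eq {p q : Path x y} (h : pathClass p = pathClass q) :
    fl (p.trans q.symm) = 1 := by
  rw [← fl_refl, fl_eq_iff, pathClass_trans, pathClass_symm, h, IsIso.hom_inv_id]
  rfl

theorem fl_trans_symm_swap (p q : Path x y) :
    fl (q.trans p.symm) = (fl (p.trans q.symm))⁻¹ := by
  rw [fl_inv, fl_eq_iff]
  simp only [pathClass_trans, pathClass_symm]
  simp

theorem fl_trans_symm_mul (p q r : Path x y) :
    fl (p.trans r.symm) = fl (q.trans r.symm) * fl (p.trans q.symm) := by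
  rw [fl_mul, fl_eq_iff]
  simp only [pathClass_trans, pathClass_symm]
  simp

theorem fl_trans_trans_symm {z : X} (p q : Path x y) (ε : Path y z) :
    fl ((p.trans ε).trans (q.trans ε).symm) = fl (p.trans q.symm) := by
  rw [fl_eq_iff]
  simp only [pathClass_trans, pathClass_symm]
  simp

theorem fl_conj_eq_mul (α β : Path x y) (γ : Path y y) :
    fl (α.trans (γ.trans α.symm)) = fl (β.trans α.symm) * fl ((α.trans γ).trans β.symm) := by
  rw [fl_mul, fl_eq_iff]
  simp only [pathClass_trans, pathClass_symm]
  simp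

theorem fl_trans_trans_symm_self (g : Path x x) (α : Path x y) :
    fl ((g.trans α).trans α.symm) = fl g := by
  rw [fl_eq_iff]
  simp only [pathClass_trans, pathClass_symm]
  simp

end Groupoid

section Whisker

variable {X : Type u} [TopologicalSpace X] {x₀ : X} (H : Subgroup (FundamentalGroup X x₀))

abbrev mkH {y : X} (p : Path x₀ y) : XtildeH x₀ H := mkX x₀ (loopMem x₀ H) ⟨y, p⟩

theorem hrel_equivalence : Equivalence (HRel x₀ (loopMem x₀ H)) where
  refl := by
    rintro ⟨_, p⟩
    refine ⟨rfl, show fl (p.trans p.symm) ∈ H from ?_⟩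
    rw [fl_trans_symm_of_pathClass_eq rfl]
    exact H.one_mem
  symm := by
    rintro ⟨_, p⟩ ⟨_, q⟩ ⟨h, hpq⟩
    dsimp only at h
    subst h
    refine ⟨rfl, show fl (q.trans p.symm) ∈ H from ?_⟩
    rw [fl_trans_symm_swap]
    exact H.inv_mem hpq
  trans := by
    rintro ⟨_, p⟩ ⟨_, q⟩ ⟨_, r⟩ ⟨h₁, hpq⟩ ⟨h₂, hqr⟩
    dsimp only at h₁ h₂
    subst h₁ h₂
    refine ⟨rfl, show fl (p.trans r.symm) ∈ H from ?_⟩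
    rw [fl_trans_symm_mul p q r]
    exact H.mul_mem hqr hpq

theorem mkX_eq_iff (π ρ : PPath X x₀) :
    mkX x₀ (loopMem x₀ H) π = mkX x₀ (loopMem x₀ H) ρ ↔ HRel x₀ (loopMem x₀ H) π ρ :=
  Quot.eq.trans (hrel_equivalence H).eqvGen_iff

variable {H}

theorem mkH_eq_iff {y : X} {p q : Path x₀ y} : mkH H p = mkH H q ↔ fl (p.trans q.symm) ∈ H := by
  rw [mkX_eq_iff]
  exact ⟨fun ⟨_, h⟩ => h, fun h => ⟨rfl, h⟩⟩

theorem mkH_eq_of_pathClass_eq {y : X} {p q : Path x₀ y} (h : pathClass p = pathClass q) :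
    mkH H p = mkH H q :=
  mkH_eq_iff.2 ((fl_trans_symm_of_pathClass_eq h).symm ▸ H.one_mem)

theorem mkH_trans_eq_of_eq {y z : X} {p q : Path x₀ y} (h : mkH H p = mkH H q) (ε : Path y z) :
    mkH H (p.trans ε) = mkH H (q.trans ε) := by
  rw [mkH_eq_iff, fl_trans_trans_symm]
  exact mkH_eq_iff.1 h

theorem target_eq_of_mkX_eq {π ρ : PPath X x₀}
    (h : mkX x₀ (loopMem x₀ H) π = mkX x₀ (loopMem x₀ H) ρ) : π.target = ρ.target :=
  ((mkX_eq_iff H π ρ).1 h).1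

theorem mem_whBasic_self {y : X} {p : Path x₀ y} {U : Set X} (hy : y ∈ U) :
    mkH H p ∈ whBasic x₀ (loopMem x₀ H) ⟨y, p⟩ U :=
  ⟨y, Path.refl y, by simpa using hy,
    mkH_eq_of_pathClass_eq (by rw [pathClass_trans, pathClass_refl, Category.comp_id])⟩

theorem whBasic_mono {δ : PPath X x₀} {U V : Set X} (h : U ⊆ V) :
    whBasic x₀ (loopMem x₀ H) δ U ⊆ whBasic x₀ (loopMem x₀ H) δ V :=
  fun _ ⟨z, β, hβ, heq⟩ => ⟨z, β, hβ.trans h, heq⟩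

theorem whBasic_subset_of_mem {y : X} {p : Path x₀ y} {δ : PPath X x₀} {U : Set X}
    (h : mkH H p ∈ whBasic x₀ (loopMem x₀ H) δ U) :
    y ∈ U ∧ whBasic x₀ (loopMem x₀ H) ⟨y, p⟩ U ⊆ whBasic x₀ (loopMem x₀ H) δ U := by
  obtain ⟨z, β, hβ, heq⟩ := h
  obtain rfl : y = z := target_eq_of_mkX_eq heq
  refine ⟨hβ ⟨1, β.target⟩, ?_⟩
  rintro _ ⟨w, ε, hε, rfl⟩
  refine ⟨w, β.trans ε, by simpa [Path.trans_range] using ⟨hβ, hε⟩, ?_⟩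
  refine (mkH_trans_eq_of_eq heq ε).trans ?_
  exact mkH_eq_of_pathClass_eq (by simp only [pathClass_trans, Category.assoc])

theorem isOpen_whBasic {δ : PPath X x₀} {U : Set X} (hU : IsOpen U) (hδ : δ.target ∈ U) :
    IsOpen (whBasic x₀ (loopMem x₀ H) δ U) :=
  GenerateOpen.basic _ ⟨δ, U, hU, hδ, rfl⟩

variable (H) in
theorem isTopologicalBasis_whBasic :
    IsTopologicalBasis
      { S | ∃ (δ : PPath X x₀) (U : Set X),
          IsOpen U ∧ δ.target ∈ U ∧ S = whBasic x₀ (loopMem x₀ H) δ U } := by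
  refine ⟨?_, ?_, rfl⟩
  · rintro _ ⟨δ₁, U₁, hU₁, -, rfl⟩ _ ⟨δ₂, U₂, hU₂, -, rfl⟩ q ⟨hq₁, hq₂⟩
    induction q using Quot.ind with | _ π
    obtain ⟨y, p⟩ := π
    obtain ⟨hy₁, hsub₁⟩ := whBasic_subset_of_mem hq₁
    obtain ⟨hy₂, hsub₂⟩ := whBasic_subset_of_mem hq₂
    exact ⟨_, ⟨⟨y, p⟩, U₁ ∩ U₂, hU₁.inter hU₂, ⟨hy₁, hy₂⟩, rfl⟩, mem_whBasic_self ⟨hy₁, hy₂⟩,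
      subset_inter ((whBasic_mono inter_subset_left).trans hsub₁)
        ((whBasic_mono inter_subset_right).trans hsub₂)⟩
  · refine eq_univ_of_forall fun q => ?_
    induction q using Quot.ind with | _ π
    obtain ⟨y, p⟩ := π
    exact ⟨_, ⟨⟨y, p⟩, univ, isOpen_univ, mem_univ y, rfl⟩, mem_whBasic_self (mem_univ y)⟩

theorem nhds_mkH_hasBasis {y : X} (p : Path x₀ y) :
    (𝓝 (mkH H p)).HasBasis (fun U : Set X => IsOpen U ∧ y ∈ U)
      (whBasic x₀ (loopMem x₀ H) ⟨y, p⟩) := by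
  refine (isTopologicalBasis_whBasic H).nhds_hasBasis.to_hasBasis ?_ ?_
  · rintro _ ⟨⟨δ, U, hU, -, rfl⟩, hp⟩
    obtain ⟨hy, hsub⟩ := whBasic_subset_of_mem hp
    exact ⟨U, ⟨hU, hy⟩, hsub⟩
  · rintro U ⟨hU, hy⟩
    exact ⟨_, ⟨⟨⟨y, p⟩, U, hU, hy, rfl⟩, mem_whBasic_self hy⟩, subset_rfl⟩

theorem disjoint_whBasic {y : X} {α β : Path x₀ y} {U : Set X}
    (h : ∀ γ : Path y y, range γ ⊆ U → mkH H (α.trans γ) ≠ mkH H β) :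
    Disjoint (whBasic x₀ (loopMem x₀ H) ⟨y, α⟩ U) (whBasic x₀ (loopMem x₀ H) ⟨y, β⟩ U) := by
  refine Set.disjoint_left.2 ?_
  -- a common point `[α ⋆ β₁] = [β ⋆ β₂]` makes `β₁ ⋆ β₂⁻¹` a loop in `U` joining the classes
  rintro _ ⟨z, β₁, hβ₁, rfl⟩ ⟨z', β₂, hβ₂, heq⟩
  obtain rfl : z = z' := target_eq_of_mkX_eq heq
  refine h (β₁.trans β₂.symm) (by simpa [Path.trans_range] using ⟨hβ₁, hβ₂⟩) ?_
  calc mkH H (α.trans (β₁.trans β₂.symm))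
      = mkH H ((α.trans β₁).trans β₂.symm) :=
        mkH_eq_of_pathClass_eq (by simp only [pathClass_trans, Category.assoc])
    _ = mkH H ((β.trans β₂).trans β₂.symm) := mkH_trans_eq_of_eq heq _
    _ = mkH H β := mkH_eq_of_pathClass_eq (by simp only [pathClass_trans, pathClass_symm]; simp)

theorem disjoint_nhds_mkFib_iff {y : X} (α β : Path x₀ y) :
    Disjoint (𝓝 (mkFib x₀ (loopMem x₀ H) α)) (𝓝 (mkFib x₀ (loopMem x₀ H) β)) ↔
      ∃ U : Set X, IsOpen U ∧ y ∈ U ∧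
        ∀ γ : Path y y, range γ ⊆ U → mkH H (α.trans γ) ≠ mkH H β := by
  rw [nhds_induced, nhds_induced]
  refine (((nhds_mkH_hasBasis α).comap _).disjoint_iff ((nhds_mkH_hasBasis β).comap _)).trans ?_
  constructor
  · rintro ⟨U₁, ⟨hU₁, hy₁⟩, U₂, ⟨hU₂, hy₂⟩, hdisj⟩
    refine ⟨U₁ ∩ U₂, hU₁.inter hU₂, ⟨hy₁, hy₂⟩, fun γ hγ heq => ?_⟩
    have hα : mkH H (α.trans γ) ∈ whBasic x₀ (loopMem x₀ H) ⟨y, α⟩ U₁ :=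
      ⟨y, γ, hγ.trans inter_subset_left, rfl⟩
    have hβ : mkH H (α.trans γ) ∈ whBasic x₀ (loopMem x₀ H) ⟨y, β⟩ U₂ :=
      heq ▸ mem_whBasic_self hy₂
    exact Set.disjoint_left.1 hdisj (show mkFib x₀ (loopMem x₀ H) (α.trans γ) ∈ _ from hα) hβ
  · rintro ⟨U, hU, hy, h⟩
    exact ⟨U, ⟨hU, hy⟩, U, ⟨hU, hy⟩, (disjoint_whBasic h).preimage _⟩

end Whisker

section Fiber

variable {X : Type u} [TopologicalSpace X] {x₀ : X} {P : Path x₀ x₀ → Prop} {y : X}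

theorem Fib.forall_mkFib {Q : Fib x₀ P y → Prop} :
    (∀ a, Q a) ↔ ∀ δ : Path x₀ y, Q (mkFib x₀ P δ) := by
  refine ⟨fun h δ => h _, fun h => ?_⟩
  rintro ⟨q, hqy⟩
  induction q using Quot.ind with | _ π
  obtain ⟨z, δ⟩ := π
  obtain rfl : z = y := hqy
  exact h δ

theorem mkFib_inj {α β : Path x₀ y} :
    mkFib x₀ P α = mkFib x₀ P β ↔ mkX x₀ P ⟨y, α⟩ = mkX x₀ P ⟨y, β⟩ :=
  Subtype.ext_iff

end Fiber

section HomotopicallyHausdorff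

variable {X : Type u} [TopologicalSpace X] {x₀ : X} {H : Subgroup (FundamentalGroup X x₀)}

theorem exists_mem_fl_conj_eq_pmul_iff {y : X} (α β : Path x₀ y) (γ : Path y y) :
    (∃ h ∈ H, fl (α.trans (γ.trans α.symm)) = pmul h (fl (β.trans α.symm))) ↔
      mkH H (α.trans γ) = mkH H β := by
  simp only [mkH_eq_iff, fl_conj_eq_mul α β γ, pmul_eq_mul, mul_right_inj, exists_eq_right']

theorem homHausdorffRel_iff :
    HomHausdorffRel x₀ H ↔ ∀ (y : X) (α β : Path x₀ y), mkH H α ≠ mkH H β →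
      ∃ U : Set X, IsOpen U ∧ y ∈ U ∧
        ∀ γ : Path y y, range γ ⊆ U → mkH H (α.trans γ) ≠ mkH H β := by
  constructor
  · intro hH y α β hne
    obtain ⟨U, hU, hy, hUsep⟩ :=
      hH y α (fl (β.trans α.symm)) fun hmem => hne (mkH_eq_iff.2 hmem).symm
    exact ⟨U, hU, hy, fun γ hγ heq => hUsep γ hγ ((exists_mem_fl_conj_eq_pmul_iff α β γ).2 heq)⟩
  · intro hsep y α g hg
    obtain ⟨g, rfl⟩ := fl_surjective x₀ g
    have hβ : fl ((g.trans α).trans α.symm) = fl g := fl_trans_trans_symm_self g α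
    obtain ⟨U, hU, hy, hUsep⟩ := hsep y α (g.trans α) fun heq =>
      hg (hβ ▸ mkH_eq_iff.1 heq.symm)
    refine ⟨U, hU, hy, fun γ hγ hconj => hUsep γ hγ ?_⟩
    rw [← exists_mem_fl_conj_eq_pmul_iff, hβ]
    exact hconj

end HomotopicallyHausdorff

theorem statement17_general {X : Type u} [TopologicalSpace X] (x₀ : X)
    (H : Subgroup (FundamentalGroup X x₀)) :
    HomHausdorffRel x₀ H ↔ ∀ x : X, T2Space (Fib x₀ (loopMem x₀ H) x) := by
  rw [homHausdorffRel_iff]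
  refine forall_congr' fun y => ?_
  rw [t2Space_iff_disjoint_nhds, _root_.Pairwise, Fib.forall_mkFib]
  refine forall_congr' fun α => ?_
  rw [Fib.forall_mkFib]
  refine forall_congr' fun β => ?_
  simp only [Ne, mkFib_inj, disjoint_nhds_mkFib_iff]

/-- Let `X` be path connected and let `H` be a subgroup of `π₁(X, x₀)`.
Then `X` is homotopically Hausdorff relative to `H` if and only if the fiber
`(p_H⁻¹(x))^wh` is a Hausdorff space for every `x ∈ X`. -/
theorem statement17 {X : Type u} [TopologicalSpace X] [PathConnectedSpace X] (x₀ : X)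
    (H : Subgroup (FundamentalGroup X x₀)) :
    HomHausdorffRel x₀ H ↔ ∀ x : X, T2Space (Fib x₀ (loopMem x₀ H) x) :=
  statement17_general x₀ H

end SLTF
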